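/- arXiv:1401.5422 — 2 statements merged into one kernel-verified Lean document; each statement's English description precedes it below -/
import Mathlib

section
/- Let (B_ℓ)_{ℓ≥0} be any sequence of rational numbers and let (C_ℓ)_{ℓ≥0} be the formal inverse coefficient sequence of (B_ℓ). Then C_0 = −B_0 and, for every ℓ ≥ 1, C_ℓ = −Σ_{k=0}^{ℓ−1} C_k·M_{ℓ−k} − (M_{ℓ+1} − P_ℓ). -/
open scoped BigOperators

lemma jmap_apply {j : ℕ} (v : Fin j → ℕ) (i : ℕ) :
    (∑ t : Fin j, Finsupp.single (t : ℕ) (v t)) i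
      = if h : i < j then v ⟨i, h⟩ else 0 := by
  rw [Finsupp.finset_sum_apply]
  simp only [Finsupp.single_apply]
  split
  · next h =>
    rw [Finset.sum_eq_single (⟨i, h⟩ : Fin j)]
    · simp
    · intro b _ hb
      simp only [ite_eq_right_iff]
      intro hbi; exact absurd (Fin.ext hbi) hb
    · simp
  · next h =>
    apply Finset.sum_eq_zero
    intro t _
    rw [if_neg]
    intro ht; exact h (ht ▸ t.isLt)

lemma coeff_mk_pow (B : ℕ → ℚ) (j m : ℕ) :
    PowerSeries.coeff m ((PowerSeries.mk B) ^ j) =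
      ∑ v ∈ Finset.Nat.antidiagonalTuple j m, ∏ t, B (v t) := by
  rw [PowerSeries.coeff_pow]
  refine Finset.sum_nbij' (fun l => fun t : Fin j => l t.val)
    (fun v => ∑ t : Fin j, Finsupp.single (t : ℕ) (v t)) ?_ ?_ ?_ ?_ ?_
  · intro l hl
    rw [Finset.mem_finsuppAntidiag] at hl
    rw [Finset.Nat.mem_antidiagonalTuple]
    rw [← hl.1, Finset.sum_range fun i => l i]
  · intro v hv
    rw [Finset.Nat.mem_antidiagonalTuple] at hv
    rw [Finset.mem_finsuppAntidiag]
    constructor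
    · have h1 : ∀ i ∈ Finset.range j,
          ((fun v => ∑ t : Fin j, Finsupp.single (t : ℕ) (v t)) v) i
            = if h : i < j then v ⟨i, h⟩ else 0 := fun i _ => jmap_apply v i
      rw [Finset.sum_congr rfl h1,
        Finset.sum_range fun i => if h : i < j then v ⟨i, h⟩ else 0, ← hv]
      apply Finset.sum_congr rfl
      intro t _
      simp
    · intro i hi
      simp only [Finsupp.mem_support_iff, jmap_apply] at hi
      rw [Finset.mem_range]
      by_contra h
      exact hi (dif_neg h)
  · intro l hl
    rw [Finset.mem_finsuppAntidiag] at hl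
    ext i
    rw [jmap_apply]
    split
    · rfl
    · next h =>
      by_contra h2
      have := hl.2 (Finsupp.mem_support_iff.mpr fun he => h2 he.symm)
      rw [Finset.mem_range] at this
      exact h this
  · intro v _
    ext t
    show (∑ t : Fin j, Finsupp.single (t : ℕ) (v t)) t.val = v t
    rw [jmap_apply]
    simp
  · intro l _
    show _ = ∏ t : Fin j, B (l t.val)
    rw [← Finset.prod_range fun i => B (l i)]
    apply Finset.prod_congr rfl
    intro t _
    rw [PowerSeries.coeff_mk]

/-- `M_k = Σ_{j=1}^k binom(k,j) Σ_{(i_1,…,i_j): Σ_t (i_t+1)=k} B_{i_1}⋯B_{i_j}`.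
(A tuple `(i_1,…,i_j)` of nonnegative integers satisfies `Σ_t (i_t+1) = k` iff
`Σ_t i_t = k - j`; here `j ≤ k` so natural subtraction is exact.) -/
noncomputable def M (B : ℕ → ℚ) (k : ℕ) : ℚ :=
  ∑ j ∈ Finset.Icc 1 k, (k.choose j : ℚ) *
    ∑ v ∈ Finset.Nat.antidiagonalTuple j (k - j), ∏ t, B (v t)

/-- `P_k = Σ_{j=1}^k binom(k,j) Σ_{(i_1,…,i_j): Σ_t (i_t+1)=k+1} B_{i_1}⋯B_{i_j}`. -/
noncomputable def P (B : ℕ → ℚ) (k : ℕ) : ℚ :=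
  ∑ j ∈ Finset.Icc 1 k, (k.choose j : ℚ) *
    ∑ v ∈ Finset.Nat.antidiagonalTuple j (k + 1 - j), ∏ t, B (v t)

/-- `φ̂ = X⁻¹ + Σ_{ℓ≥0} B_ℓ Xˡ` as a formal Laurent series over `ℚ`. -/
noncomputable def phiHat (B : ℕ → ℚ) : LaurentSeries ℚ :=
  HahnSeries.single (-1 : ℤ) (1 : ℚ) + HahnSeries.ofPowerSeries ℤ ℚ (PowerSeries.mk B)

/-- `(C_ℓ)` is the formal inverse coefficient sequence of `(B_ℓ)`: for every `ℓ ≥ 0`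
the coefficient of `X^0` in `φ̂^{ℓ+1} + Σ_{k=0}^{ℓ} C_k φ̂^{ℓ-k} - X⁻¹·φ̂^{ℓ}` vanishes. -/
def IsFormalInverseSeq (B C : ℕ → ℚ) : Prop :=
  ∀ ℓ : ℕ,
    (phiHat B ^ (ℓ + 1) + (∑ k ∈ Finset.range (ℓ + 1), C k • phiHat B ^ (ℓ - k))
      - HahnSeries.single (-1 : ℤ) (1 : ℚ) * phiHat B ^ ℓ).coeff 0 = 0

lemma phiHat_eq (B : ℕ → ℚ) :
    phiHat B = HahnSeries.single (-1 : ℤ) (1 : ℚ) *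
      HahnSeries.ofPowerSeries ℤ ℚ (1 + PowerSeries.X * PowerSeries.mk B) := by
  rw [map_add, map_mul, mul_add, RingHom.map_one, mul_one, HahnSeries.ofPowerSeries_X,
    ← mul_assoc, HahnSeries.single_mul_single, phiHat]
  norm_num

example (B : ℕ → ℚ) (n : ℕ) : phiHat B ^ n =
    HahnSeries.single (-(n : ℤ)) (1 : ℚ) *
      HahnSeries.ofPowerSeries ℤ ℚ ((1 + PowerSeries.X * PowerSeries.mk B) ^ n) := by
  rw [phiHat_eq, mul_pow, HahnSeries.single_pow, one_pow, map_pow]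
  norm_num


lemma phiHat_pow (B : ℕ → ℚ) (n : ℕ) : phiHat B ^ n =
    HahnSeries.single (-(n : ℤ)) (1 : ℚ) *
      HahnSeries.ofPowerSeries ℤ ℚ ((1 + PowerSeries.X * PowerSeries.mk B) ^ n) := by
  rw [phiHat_eq, mul_pow, HahnSeries.single_pow, one_pow, map_pow]
  norm_num

lemma phiHat_pow_coeff (B : ℕ → ℚ) (n m : ℕ) (hnm : n ≤ m) :
    (phiHat B ^ n).coeff ((m : ℤ) - n) =
      ∑ i ∈ Finset.range (n + 1), (n.choose i : ℚ) *
        ∑ v ∈ Finset.Nat.antidiagonalTuple i (m - i), ∏ t, B (v t) := by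
  rw [phiHat_pow]
  have h0 : (m : ℤ) - n = (m : ℤ) + (-(n : ℤ)) := by ring
  rw [h0, HahnSeries.coeff_single_mul_add, one_mul, HahnSeries.ofPowerSeries_apply_coeff]
  rw [add_comm (1 : PowerSeries ℚ), add_pow, map_sum]
  apply Finset.sum_congr rfl
  intro i hi
  rw [Finset.mem_range] at hi
  have hc : ((n.choose i : ℕ) : PowerSeries ℚ) = PowerSeries.C ((n.choose i : ℕ) : ℚ) := by
    rw [map_natCast (PowerSeries.C (R := ℚ))]
  rw [one_pow, mul_one, hc, PowerSeries.coeff_mul_C, mul_pow, PowerSeries.coeff_X_pow_mul',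
    if_pos (le_trans (Nat.lt_succ_iff.mp hi) hnm), coeff_mk_pow, mul_comm]

lemma range_succ_eq_insert (n : ℕ) : Finset.range (n + 1) = insert 0 (Finset.Icc 1 n) := by
  ext i; simp; omega

lemma coeff_finset_sum {α : Type*} (s : Finset α) (f : α → HahnSeries ℤ ℚ) (g : ℤ) :
    (∑ x ∈ s, f x).coeff g = ∑ x ∈ s, (f x).coeff g :=
  map_sum (HahnSeries.coeff.addMonoidHom g) f s

lemma coeff_zero_phiHat_pow (B : ℕ → ℚ) (n : ℕ) (hn : 1 ≤ n) :
    (phiHat B ^ n).coeff 0 = M B n := by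
  have h := phiHat_pow_coeff B n n le_rfl
  rw [sub_self] at h
  rw [h, range_succ_eq_insert, Finset.sum_insert (by simp)]
  obtain ⟨n', rfl⟩ : ∃ n', n = n' + 1 := ⟨n - 1, by omega⟩
  rw [M]
  simp [Finset.Nat.antidiagonalTuple_zero_succ]

lemma coeff_zero_single_mul_phiHat_pow (B : ℕ → ℚ) (n : ℕ) :
    (HahnSeries.single (-1 : ℤ) (1 : ℚ) * phiHat B ^ n).coeff 0 = P B n := by
  have h0 : (0 : ℤ) = 1 + (-1) := by ring
  rw [h0, HahnSeries.coeff_single_mul_add, one_mul]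
  have h1 : (1 : ℤ) = ((n + 1 : ℕ) : ℤ) - n := by push_cast; ring
  rw [h1, phiHat_pow_coeff B n (n + 1) (by omega), range_succ_eq_insert,
    Finset.sum_insert (by simp), P]
  simp [Finset.Nat.antidiagonalTuple_zero_succ]


theorem inverse_coeff_recurrence (B C : ℕ → ℚ) (hC : IsFormalInverseSeq B C) :
    C 0 = -B 0 ∧
    ∀ ℓ : ℕ, 1 ≤ ℓ →
      C ℓ = -(∑ k ∈ Finset.range ℓ, C k * M B (ℓ - k)) - (M B (ℓ + 1) - P B ℓ) := by
  have hone : (phiHat B ^ 0).coeff 0 = 1 := by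
    rw [pow_zero]; simp [HahnSeries.coeff_one]
  have key : ∀ ℓ : ℕ, M B (ℓ + 1) +
      (∑ k ∈ Finset.range (ℓ + 1), C k * (phiHat B ^ (ℓ - k)).coeff 0) - P B ℓ = 0 := by
    intro ℓ
    have h := hC ℓ
    rw [HahnSeries.coeff_sub, HahnSeries.coeff_add] at h
    rw [coeff_zero_phiHat_pow B (ℓ + 1) (by omega), coeff_zero_single_mul_phiHat_pow] at h
    rw [coeff_finset_sum] at h
    simp only [HahnSeries.coeff_smul, smul_eq_mul] at h
    exact h
  constructor
  · have h := key 0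
    rw [Finset.sum_range_one, Nat.sub_zero, hone] at h
    have hM1 : M B 1 = B 0 := by
      simp [M, Finset.Nat.antidiagonalTuple_one]
    have hP0 : P B 0 = 0 := by simp [P]
    rw [hM1, hP0] at h
    linarith
  · intro ℓ hℓ
    have h := key ℓ
    rw [Finset.sum_range_succ, Nat.sub_self, hone] at h
    have hsum : ∑ k ∈ Finset.range ℓ, C k * (phiHat B ^ (ℓ - k)).coeff 0
        = ∑ k ∈ Finset.range ℓ, C k * M B (ℓ - k) := by
      apply Finset.sum_congr rfl
      intro k hk
      rw [Finset.mem_range] at hk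
      rw [coeff_zero_phiHat_pow B (ℓ - k) (by omega)]
    rw [hsum] at h
    linarith
end

section
/- Let (B_ℓ)_{ℓ≥0} be a sequence of rational numbers with ord(B_ℓ) = −p_ℓ for every ℓ ≥ 0, and let (C_ℓ)_{ℓ≥0} satisfy the recurrence C_0 = −B_0 and C_ℓ = −Σ_{k=0}^{ℓ−1} C_k·M_{ℓ−k} − (M_{ℓ+1} − P_ℓ) for ℓ ≥ 1. Let ℓ > 1 be odd, and assume that ord(C_k) = −p_k for every odd k with 1 ≤ k ≤ ℓ−1 and that ord(C_k) > −p_k for every even k with 2 ≤ k ≤ ℓ−1. Then ord(C_ℓ) = −p_ℓ; in particular C_ℓ ≠ 0. -/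
open scoped BigOperators

/-- 2-adic valuation of a rational, with `ord 0 = ⊤`. -/
noncomputable def ord (q : ℚ) : WithTop ℤ :=
  if q = 0 then ⊤ else (padicValRat 2 q : WithTop ℤ)

/-- `p ℓ = ℓ + 1 + ord((ℓ+1)!)`. -/
def p (ℓ : ℕ) : ℕ := ℓ + 1 + padicValNat 2 (Nat.factorial (ℓ + 1))

lemma padic_prod {ι : Type*} (s : Finset ι) (f : ι → ℕ) (hf : ∀ i ∈ s, f i ≠ 0) :
    padicValNat 2 (∏ i ∈ s, f i) = ∑ i ∈ s, padicValNat 2 (f i) := by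
  induction s using Finset.cons_induction with
  | empty => simp
  | cons a s ha ih =>
    rw [Finset.prod_cons, Finset.sum_cons,
      padicValNat.mul (hf a (Finset.mem_cons_self a s))
        (Finset.prod_ne_zero_iff.2 fun i hi => hf i (Finset.mem_cons_of_mem hi)),
      ih fun i hi => hf i (Finset.mem_cons_of_mem hi)]

lemma padic_le_of_dvd {a b : ℕ} (h : a ∣ b) (hb : b ≠ 0) :
    padicValNat 2 a ≤ padicValNat 2 b := by
  obtain ⟨c, rfl⟩ := h
  have ha : a ≠ 0 := fun h => hb (by simp [h])
  have hc : c ≠ 0 := fun h => hb (by simp [h])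
  rw [padicValNat.mul ha hc]
  exact Nat.le_add_right _ _

lemma psum {j n : ℕ} (w : Fin j → ℕ) (h : ∑ t, (w t + 1) = n + 1) :
    ∑ t, p (w t) ≤ p n := by
  have h1 : ∑ t, p (w t)
      = (∑ t, (w t + 1)) + ∑ t, padicValNat 2 (Nat.factorial (w t + 1)) := by
    simp only [p]
    rw [← Finset.sum_add_distrib]
  have h2 : (∏ t, Nat.factorial (w t + 1)) ∣ Nat.factorial (n + 1) := by
    rw [← h]; exact Nat.prod_factorial_dvd_factorial_sum _ _
  have h3 : ∑ t, padicValNat 2 (Nat.factorial (w t + 1))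
      ≤ padicValNat 2 (Nat.factorial (n + 1)) := by
    rw [← padic_prod _ _ fun i _ => Nat.factorial_ne_zero _]
    exact padic_le_of_dvd h2 (Nat.factorial_ne_zero _)
  rw [h1, h]
  exact Nat.add_le_add_left h3 _

lemma pB (a : ℕ) : p a + p a + 1 ≤ p (2 * a + 1) := by
  have key : Nat.factorial (2 * (a + 1))
      = (2 * (a + 1)).choose (a + 1) * Nat.factorial (a + 1) * Nat.factorial (a + 1) := by
    have := Nat.choose_mul_factorial_mul_factorial
      (show a + 1 ≤ 2 * (a + 1) by omega)
    rw [show 2 * (a + 1) - (a + 1) = a + 1 by omega] at this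
    omega
  have hch : (2 * (a + 1)).choose (a + 1) ≠ 0 :=
    (Nat.choose_pos (by omega)).ne'
  have hdvd : 2 ∣ (2 * (a + 1)).choose (a + 1) := by
    have := Nat.two_dvd_centralBinom_succ a
    rwa [Nat.centralBinom] at this
  have h1 : 1 ≤ padicValNat 2 ((2 * (a + 1)).choose (a + 1)) :=
    one_le_padicValNat_of_dvd hch hdvd
  have h2 : padicValNat 2 (Nat.factorial (2 * (a + 1)))
      = padicValNat 2 ((2 * (a + 1)).choose (a + 1))
        + padicValNat 2 (Nat.factorial (a + 1)) + padicValNat 2 (Nat.factorial (a + 1)) := by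
    rw [key, padicValNat.mul (Nat.mul_ne_zero hch (Nat.factorial_ne_zero _)) (Nat.factorial_ne_zero _),
      padicValNat.mul hch (Nat.factorial_ne_zero _)]
  unfold p
  rw [show 2 * a + 1 + 1 = 2 * (a + 1) by omega]
  omega

lemma p_zero : p 0 = 1 := by simp [p]

lemma p_step {ℓ : ℕ} (h2 : 2 ∣ ℓ + 1) (h1 : 1 ≤ ℓ) : p (ℓ - 1) + 2 ≤ p ℓ := by
  obtain ⟨m, rfl⟩ : ∃ m, ℓ = m + 1 := ⟨ℓ - 1, by omega⟩
  have hfac : Nat.factorial (m + 1 + 1) = (m + 2) * Nat.factorial (m + 1) := rfl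
  have hv : padicValNat 2 (Nat.factorial (m + 2))
      = padicValNat 2 (m + 2) + padicValNat 2 (Nat.factorial (m + 1)) := by
    rw [hfac, padicValNat.mul (by omega) (Nat.factorial_ne_zero _)]
  have hd : 1 ≤ padicValNat 2 (m + 2) :=
    one_le_padicValNat_of_dvd (by omega) (by omega)
  unfold p
  simp only [Nat.add_sub_cancel]
  rw [show m + 1 + 1 = m + 2 from rfl]
  omega

lemma psum_strict {j' n : ℕ} (w : Fin (j' + 2) → ℕ)
    (h : ∑ t, (w t + 1) = n + 1) (he : w 0 = w 1) :
    (∑ t, p (w t)) + 1 ≤ p n := by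
  set a := w 0 with ha
  set u : Fin (j' + 1) → ℕ := Fin.cons (2 * a + 1) (fun t => w t.succ.succ) with hu
  have hsum2 : ∑ t, (w t + 1) = (w 0 + 1) + ((w 1 + 1) + ∑ t : Fin j', (w t.succ.succ + 1)) := by
    rw [Fin.sum_univ_succ (f := fun t => w t + 1), Fin.sum_univ_succ (f := fun t => w t.succ + 1)]
    simp [Fin.succ_zero_eq_one]
  have husum : ∑ t, (u t + 1) = n + 1 := by
    rw [hu, Fin.sum_univ_succ]
    simp only [Fin.cons_zero, Fin.cons_succ]
    rw [← h, hsum2, ← he]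
    omega
  have h1 := psum u husum
  have h2 : ∑ t, p (u t) = p (2 * a + 1) + ∑ t : Fin j', p (w t.succ.succ) := by
    rw [hu, Fin.sum_univ_succ]
    simp only [Fin.cons_zero, Fin.cons_succ]
  have h3 : ∑ t, p (w t) = p (w 0) + (p (w 1) + ∑ t : Fin j', p (w t.succ.succ)) := by
    rw [Fin.sum_univ_succ (f := fun t => p (w t)), Fin.sum_univ_succ (f := fun t => p (w t.succ))]
    simp [Fin.succ_zero_eq_one]
  have h4 := pB a
  rw [h3, ← he, ← ha]
  omega

lemma ord_eq_v (q : ℚ) : ord q = Padic.addValuation (q : ℚ_[2]) := by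
  unfold ord
  by_cases h : q = 0
  · simp [h, Padic.addValuation.apply]
  · rw [if_neg h, Padic.addValuation.apply (by simpa using h), Padic.valuation_ratCast]

lemma ord_mul (x y : ℚ) : ord (x * y) = ord x + ord y := by
  rw [ord_eq_v, ord_eq_v, ord_eq_v, Rat.cast_mul]
  exact Padic.addValuation.map_mul _ _

lemma ord_neg (x : ℚ) : ord (-x) = ord x := by
  rw [ord_eq_v, ord_eq_v, Rat.cast_neg]
  exact AddValuation.map_neg _ _

lemma ord_add_ge {x y : ℚ} {c : WithTop ℤ} (hx : c ≤ ord x) (hy : c ≤ ord y) :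
    c ≤ ord (x + y) := by
  rw [ord_eq_v]; rw [ord_eq_v] at hx hy
  rw [Rat.cast_add]
  exact AddValuation.map_le_add _ hx hy

lemma ord_sum_ge {ι : Type*} {s : Finset ι} {f : ι → ℚ} {c : WithTop ℤ}
    (h : ∀ i ∈ s, c ≤ ord (f i)) : c ≤ ord (∑ i ∈ s, f i) := by
  rw [ord_eq_v, Rat.cast_sum]
  exact AddValuation.map_le_sum _ fun i hi => by rw [← ord_eq_v]; exact h i hi

lemma ord_one : ord 1 = 0 := by simp [ord]

lemma ord_prod_ge {ι : Type*} (s : Finset ι) (f : ι → ℚ) (g : ι → ℤ)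
    (h : ∀ i ∈ s, (g i : WithTop ℤ) ≤ ord (f i)) :
    ((∑ i ∈ s, g i : ℤ) : WithTop ℤ) ≤ ord (∏ i ∈ s, f i) := by
  induction s using Finset.cons_induction with
  | empty => simp [ord_one]
  | cons a s ha ih =>
    rw [Finset.prod_cons, Finset.sum_cons, ord_mul, WithTop.coe_add]
    exact add_le_add (h a (Finset.mem_cons_self a s))
      (ih fun i hi => h i (Finset.mem_cons_of_mem hi))

lemma ord_natCast {n : ℕ} (hn : n ≠ 0) :
    ord (n : ℚ) = ((padicValNat 2 n : ℤ) : WithTop ℤ) := by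
  unfold ord
  rw [if_neg (by exact_mod_cast hn), padicValRat.of_nat]

lemma ord_nat_nonneg {n : ℕ} (hn : n ≠ 0) : (0 : WithTop ℤ) ≤ ord (n : ℚ) := by
  rw [ord_natCast hn]
  exact_mod_cast Int.ofNat_nonneg _

lemma ord_two : ord (2 : ℚ) = ((1 : ℤ) : WithTop ℤ) := by
  have : ((2 : ℕ) : ℚ) = (2 : ℚ) := by norm_num
  rw [← this, ord_natCast (by norm_num), padicValNat.self (by norm_num)]
  norm_num

lemma ord_add_eq {x y : ℚ} {c : ℤ} (hx : ord x = (c : WithTop ℤ))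
    (hy : (c : WithTop ℤ) < ord y) : ord (x + y) = (c : WithTop ℤ) := by
  have h1 : (c : WithTop ℤ) ≤ ord (x + y) :=
    ord_add_ge (le_of_eq hx.symm) (le_of_lt hy)
  have h2 : ¬ (c : WithTop ℤ) < ord (x + y) := by
    intro hlt
    have : (c : WithTop ℤ) < ord (x + y + -y) :=
      lt_of_lt_of_le (lt_min hlt (by rwa [ord_neg]))
        (ord_add_ge (min_le_left _ _) (min_le_right _ _))
    rw [add_neg_cancel_right, hx] at this
    exact lt_irrefl _ this
  exact le_antisymm (not_lt.1 h2) h1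

lemma ord_ne_zero {x : ℚ} {c : ℤ} (hx : ord x = (c : WithTop ℤ)) : x ≠ 0 := by
  intro h
  rw [h] at hx
  simp only [ord, if_pos rfl] at hx
  exact (WithTop.coe_ne_top (a := c)) hx.symm

lemma lt_coe_succ_le {c : ℤ} {x : WithTop ℤ} (h : (c : WithTop ℤ) < x) :
    ((c + 1 : ℤ) : WithTop ℤ) ≤ x := by
  cases x with
  | top => exact le_top
  | coe m =>
    rw [WithTop.coe_lt_coe] at h
    exact_mod_cast h

section Blemmas
variable {B : ℕ → ℚ} (hB : ∀ ℓ : ℕ, ord (B ℓ) = (-(p ℓ : ℤ) : WithTop ℤ))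
include hB

lemma prod_bound {j n : ℕ} (w : Fin j → ℕ) (h : ∑ t, (w t + 1) = n + 1) :
    ((-(p n : ℤ) : ℤ) : WithTop ℤ) ≤ ord (∏ t, B (w t)) := by
  have h1 := ord_prod_ge Finset.univ (fun t => B (w t)) (fun t => -(p (w t) : ℤ))
    (fun t _ => le_of_eq (hB (w t)).symm)
  refine le_trans ?_ h1
  have h2 := psum w h
  rw [WithTop.coe_le_coe]
  have : ∑ t, (-(p (w t) : ℤ)) = -((∑ t, p (w t) : ℕ) : ℤ) := by
    push_cast; rw [Finset.sum_neg_distrib]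
  rw [this]
  exact neg_le_neg (by exact_mod_cast h2)

lemma prod_bound_strict {j' n : ℕ} (w : Fin (j' + 2) → ℕ)
    (h : ∑ t, (w t + 1) = n + 1) (he : w 0 = w 1) :
    ((1 - (p n : ℤ) : ℤ) : WithTop ℤ) ≤ ord (∏ t, B (w t)) := by
  have h1 := ord_prod_ge Finset.univ (fun t => B (w t)) (fun t => -(p (w t) : ℤ))
    (fun t _ => le_of_eq (hB (w t)).symm)
  refine le_trans ?_ h1
  have h2 := psum_strict w h he
  rw [WithTop.coe_le_coe]
  have : ∑ t, (-(p (w t) : ℤ)) = -((∑ t, p (w t) : ℕ) : ℤ) := by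
    push_cast; rw [Finset.sum_neg_distrib]
  rw [this]
  omega

omit hB in
lemma mem_tuple_sum {j r : ℕ} {v : Fin j → ℕ}
    (hv : v ∈ Finset.Nat.antidiagonalTuple j r) : ∑ t, (v t + 1) = r + j := by
  rw [Finset.Nat.mem_antidiagonalTuple] at hv
  rw [Finset.sum_add_distrib, hv]
  simp [Finset.card_univ]

lemma inner_sum_ge {j r n : ℕ} (hrn : r + j = n + 1) :
    ((-(p n : ℤ) : ℤ) : WithTop ℤ)
      ≤ ord (∑ v ∈ Finset.Nat.antidiagonalTuple j r, ∏ t, B (v t)) :=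
  ord_sum_ge fun v hv => prod_bound hB v (by rw [mem_tuple_sum hv, hrn])

lemma inner_strict {j' r n : ℕ} (hrn : r + (j' + 2) = n + 1) :
    ((1 - (p n : ℤ) : ℤ) : WithTop ℤ)
      ≤ ord (∑ v ∈ Finset.Nat.antidiagonalTuple (j' + 2) r, ∏ t, B (v t)) := by
  classical
  set s := Finset.Nat.antidiagonalTuple (j' + 2) r with hs
  set f : (Fin (j' + 2) → ℕ) → ℚ := fun v => ∏ t, B (v t) with hf
  have hsplit : ∑ v ∈ s, f v
      = (∑ v ∈ s.filter (fun v => v 0 = v 1), f v)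
        + ∑ v ∈ s.filter (fun v => ¬ v 0 = v 1), f v :=
    (Finset.sum_filter_add_sum_filter_not s _ f).symm
  -- the diagonal part
  have hdiag : ((1 - (p n : ℤ) : ℤ) : WithTop ℤ)
      ≤ ord (∑ v ∈ s.filter (fun v => v 0 = v 1), f v) := by
    refine ord_sum_ge fun v hv => ?_
    rw [Finset.mem_filter] at hv
    exact prod_bound_strict hB v (by rw [mem_tuple_sum hv.1, hrn]) hv.2
  -- the off-diagonal part
  have hswap : ∀ v : Fin (j' + 2) → ℕ, f (v ∘ Equiv.swap 0 1) = f v := by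
    intro v
    exact Equiv.prod_comp (Equiv.swap 0 1) (fun t => B (v t))
  have hswap_mem : ∀ v ∈ s, (v ∘ Equiv.swap 0 1) ∈ s := by
    intro v hv
    rw [hs, Finset.Nat.mem_antidiagonalTuple] at hv ⊢
    rw [← hv]
    exact Equiv.sum_comp (Equiv.swap 0 1) v
  have hoff : ∑ v ∈ s.filter (fun v => ¬ v 0 = v 1), f v
      = 2 * ∑ v ∈ s.filter (fun v => v 0 < v 1), f v := by
    have e1 : ∑ v ∈ s.filter (fun v => ¬ v 0 = v 1), f v
        = (∑ v ∈ (s.filter (fun v => ¬ v 0 = v 1)).filter (fun v => v 0 < v 1), f v)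
          + ∑ v ∈ (s.filter (fun v => ¬ v 0 = v 1)).filter (fun v => ¬ v 0 < v 1), f v :=
      (Finset.sum_filter_add_sum_filter_not _ _ f).symm
    have e2 : (s.filter (fun v => ¬ v 0 = v 1)).filter (fun v => v 0 < v 1)
        = s.filter (fun v => v 0 < v 1) := by
      rw [Finset.filter_filter]
      apply Finset.filter_congr
      intro v _
      exact ⟨fun h => h.2, fun h => ⟨by omega, h⟩⟩
    have e3 : (s.filter (fun v => ¬ v 0 = v 1)).filter (fun v => ¬ v 0 < v 1)
        = s.filter (fun v => v 1 < v 0) := by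
      rw [Finset.filter_filter]
      apply Finset.filter_congr
      intro v _
      exact ⟨fun h => by omega, fun h => ⟨by omega, by omega⟩⟩
    have e4 : ∑ v ∈ s.filter (fun v => v 1 < v 0), f v
        = ∑ v ∈ s.filter (fun v => v 0 < v 1), f v := by
      refine Finset.sum_bij' (fun v _ => v ∘ Equiv.swap 0 1) (fun v _ => v ∘ Equiv.swap 0 1)
        ?_ ?_ ?_ ?_ ?_
      · intro v hv
        rw [Finset.mem_filter] at hv ⊢
        refine ⟨hswap_mem v hv.1, ?_⟩
        simpa [Equiv.swap_apply_left, Equiv.swap_apply_right] using hv.2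
      · intro v hv
        rw [Finset.mem_filter] at hv ⊢
        refine ⟨hswap_mem v hv.1, ?_⟩
        simpa [Equiv.swap_apply_left, Equiv.swap_apply_right] using hv.2
      · intro v _
        funext t
        simp [Function.comp, Equiv.swap_apply_self]
      · intro v _
        funext t
        simp [Function.comp, Equiv.swap_apply_self]
      · intro v _
        exact (hswap v).symm
    rw [e1, e2, e3, e4, two_mul]
  rw [hsplit, hoff]
  refine ord_add_ge hdiag ?_
  rw [ord_mul, ord_two]
  have : ((1 - (p n : ℤ) : ℤ) : WithTop ℤ) = ((1:ℤ) : WithTop ℤ) + ((-(p n : ℤ) : ℤ) : WithTop ℤ) := by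
    rw [← WithTop.coe_add, WithTop.coe_eq_coe]; ring

  rw [this]
  refine add_le_add le_rfl (ord_sum_ge fun v hv => ?_)
  rw [Finset.mem_filter] at hv
  exact prod_bound hB v (by rw [mem_tuple_sum hv.1, hrn])

-- generic bound on M (m'+1)
lemma M_ge (m' : ℕ) : ((-(p m' : ℤ) : ℤ) : WithTop ℤ) ≤ ord (M B (m' + 1)) := by
  refine ord_sum_ge fun j hj => ?_
  rw [Finset.mem_Icc] at hj
  rw [ord_mul]
  have h1 : (0 : WithTop ℤ) ≤ ord ((m' + 1).choose j : ℚ) :=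
    ord_nat_nonneg (Nat.choose_pos hj.2).ne'
  have h2 := inner_sum_ge hB (j := j) (r := m' + 1 - j) (n := m') (by omega)
  calc ((-(p m' : ℤ) : ℤ) : WithTop ℤ) = 0 + ((-(p m' : ℤ) : ℤ) : WithTop ℤ) := by rw [zero_add]
    _ ≤ _ := add_le_add h1 h2

-- strict bound on M (m'+1) when m'+1 is even
lemma M_strict (m' : ℕ) (hev : 2 ∣ m' + 1) :
    ((1 - (p m' : ℤ) : ℤ) : WithTop ℤ) ≤ ord (M B (m' + 1)) := by
  refine ord_sum_ge fun j hj => ?_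
  rw [Finset.mem_Icc] at hj
  rw [ord_mul]
  rcases Nat.lt_or_ge j 2 with hj2 | hj2
  · -- j = 1
    have hj1 : j = 1 := by omega
    subst hj1
    rw [Nat.choose_one_right]
    have h1 : ((1:ℤ) : WithTop ℤ) ≤ ord ((m' + 1 : ℕ) : ℚ) := by
      rw [ord_natCast (by omega)]
      have : 1 ≤ padicValNat 2 (m' + 1) := one_le_padicValNat_of_dvd (by omega) hev
      exact_mod_cast this
    have h2 := inner_sum_ge hB (j := 1) (r := m' + 1 - 1) (n := m') (by omega)
    calc ((1 - (p m' : ℤ) : ℤ) : WithTop ℤ)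
        = ((1:ℤ) : WithTop ℤ) + ((-(p m' : ℤ) : ℤ) : WithTop ℤ) := by
          rw [← WithTop.coe_add, WithTop.coe_eq_coe]; ring
      _ ≤ _ := add_le_add h1 h2
  · obtain ⟨j', rfl⟩ : ∃ j'', j = j'' + 2 := ⟨j - 2, by omega⟩
    have h1 : (0 : WithTop ℤ) ≤ ord ((m' + 1).choose (j' + 2) : ℚ) :=
      ord_nat_nonneg (Nat.choose_pos hj.2).ne'
    have h2 := inner_strict hB (j' := j') (r := m' + 1 - (j' + 2)) (n := m') (by omega)
    calc ((1 - (p m' : ℤ) : ℤ) : WithTop ℤ) = 0 + ((1 - (p m' : ℤ) : ℤ) : WithTop ℤ) := by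
          rw [zero_add]
      _ ≤ _ := add_le_add h1 h2

-- split of P at j = 1, for odd ℓ
lemma P_split (ℓ : ℕ) (hℓ : 1 ≤ ℓ) :
    ∃ R : ℚ, P B ℓ = (ℓ : ℚ) * B ℓ + R ∧
      ((1 - (p ℓ : ℤ) : ℤ) : WithTop ℤ) ≤ ord R := by
  have h1 : (1 : ℕ) ∈ Finset.Icc 1 ℓ := by simp [hℓ]
  refine ⟨∑ j ∈ (Finset.Icc 1 ℓ).erase 1, (ℓ.choose j : ℚ) *
      ∑ v ∈ Finset.Nat.antidiagonalTuple j (ℓ + 1 - j), ∏ t, B (v t), ?_, ?_⟩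
  · rw [P, ← Finset.add_sum_erase _ _ h1]
    congr 1
    rw [Nat.choose_one_right]
    congr 1
    rw [show ℓ + 1 - 1 = ℓ from rfl, Finset.Nat.antidiagonalTuple_one, Finset.sum_singleton]
    rw [Fin.prod_univ_one]
    simp
  · refine ord_sum_ge fun j hj => ?_
    rw [Finset.mem_erase, Finset.mem_Icc] at hj
    obtain ⟨j', rfl⟩ : ∃ j'', j = j'' + 2 := ⟨j - 2, by omega⟩
    rw [ord_mul]
    have h1 : (0 : WithTop ℤ) ≤ ord (ℓ.choose (j' + 2) : ℚ) :=
      ord_nat_nonneg (Nat.choose_pos hj.2.2).ne'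
    have h2 := inner_strict hB (j' := j') (r := ℓ + 1 - (j' + 2)) (n := ℓ) (by omega)
    calc ((1 - (p ℓ : ℤ) : ℤ) : WithTop ℤ) = 0 + ((1 - (p ℓ : ℤ) : ℤ) : WithTop ℤ) := by
          rw [zero_add]
      _ ≤ _ := add_le_add h1 h2

end Blemmas

lemma coe_add_le {a b c : ℤ} {x y : WithTop ℤ} (hx : (a : WithTop ℤ) ≤ x)
    (hy : (b : WithTop ℤ) ≤ y) (h : c ≤ a + b) : (c : WithTop ℤ) ≤ x + y := by
  refine le_trans ?_ (add_le_add hx hy)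
  rw [← WithTop.coe_add, WithTop.coe_le_coe]
  exact h

lemma p_add_le {k m' n : ℕ} (h : k + m' + 1 = n) : p k + p m' ≤ p n := by
  have := psum (n := n) ![k, m'] (by simp [Fin.sum_univ_two]; omega)
  simpa [Fin.sum_univ_two] using this

theorem induction_step_odd (B C : ℕ → ℚ)
    (hB : ∀ ℓ : ℕ, ord (B ℓ) = (-(p ℓ : ℤ) : WithTop ℤ))
    (hC0 : C 0 = -B 0)
    (hrec : ∀ ℓ : ℕ, 1 ≤ ℓ →
      C ℓ = -(∑ k ∈ Finset.range ℓ, C k * M B (ℓ - k)) - (M B (ℓ + 1) - P B ℓ))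
    (ℓ : ℕ) (hℓ : 1 < ℓ) (hodd : Odd ℓ)
    (ih_odd : ∀ k : ℕ, 1 ≤ k → k ≤ ℓ - 1 → Odd k → ord (C k) = (-(p k : ℤ) : WithTop ℤ))
    (ih_even : ∀ k : ℕ, 2 ≤ k → k ≤ ℓ - 1 → Even k →
      (-(p k : ℤ) : WithTop ℤ) < ord (C k)) :
    ord (C ℓ) = (-(p ℓ : ℤ) : WithTop ℤ) ∧ C ℓ ≠ 0 := by
  have hℓ1 : 1 ≤ ℓ := le_of_lt hℓ
  have hℓmod : ℓ % 2 = 1 := Nat.odd_iff.1 hodd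
  obtain ⟨R, hP, hR⟩ := P_split hB ℓ hℓ1
  -- rewrite C ℓ
  have hEq : C ℓ = (ℓ : ℚ) * B ℓ
      + (R + (-(M B (ℓ + 1)) + -(∑ k ∈ Finset.range ℓ, C k * M B (ℓ - k)))) := by
    rw [hrec ℓ hℓ1, hP]; ring
  -- the main term
  have hmain : ord ((ℓ : ℚ) * B ℓ) = (-(p ℓ : ℤ) : WithTop ℤ) := by
    rw [ord_mul, ord_natCast (by omega),
      padicValNat.eq_zero_of_not_dvd (by omega), hB ℓ]
    simp
  -- the error term
  have hT : ((1 - (p ℓ : ℤ) : ℤ) : WithTop ℤ)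
      ≤ ord (∑ k ∈ Finset.range ℓ, C k * M B (ℓ - k)) := by
    refine ord_sum_ge fun k hk => ?_
    rw [Finset.mem_range] at hk
    set m' : ℕ := ℓ - k - 1 with hm'
    have hmk : ℓ - k = m' + 1 := by omega
    rw [hmk, ord_mul]
    rcases Nat.eq_zero_or_pos k with rfl | hkpos
    · -- k = 0
      have hC0ord : ord (C 0) = ((-1 : ℤ) : WithTop ℤ) := by
        rw [hC0, ord_neg, hB 0, p_zero]; norm_num
      have hM := M_ge hB m'
      refine coe_add_le (le_of_eq hC0ord.symm) hM ?_
      have := p_step (ℓ := ℓ) (by omega) hℓ1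
      have hm'eq : m' = ℓ - 1 := by omega
      rw [hm'eq]
      omega
    · rcases Nat.even_or_odd k with hkev | hkodd
      · -- k even, ≥ 2
        have hk2 : 2 ≤ k := by
          rcases hkev with ⟨t, ht⟩; omega
        have hCk := lt_coe_succ_le (ih_even k hk2 (by omega) hkev)
        have hM := M_ge hB m'
        refine coe_add_le hCk hM ?_
        have := p_add_le (k := k) (m' := m') (n := ℓ) (by omega)
        beta_reduce
        omega
      · -- k odd
        have hkmod : k % 2 = 1 := Nat.odd_iff.1 hkodd
        have hCk := ih_odd k (by omega) (by omega) hkodd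
        have hM := M_strict hB m' (by omega)
        refine coe_add_le (le_of_eq hCk.symm) hM ?_
        have := p_add_le (k := k) (m' := m') (n := ℓ) (by omega)
        beta_reduce
        omega
  have hE : ((1 - (p ℓ : ℤ) : ℤ) : WithTop ℤ)
      ≤ ord (R + (-(M B (ℓ + 1)) + -(∑ k ∈ Finset.range ℓ, C k * M B (ℓ - k)))) := by
    refine ord_add_ge hR (ord_add_ge ?_ ?_)
    · rw [ord_neg]
      exact M_strict hB ℓ (by omega)
    · rw [ord_neg]
      exact hT
  have hfinal : ord (C ℓ) = (-(p ℓ : ℤ) : WithTop ℤ) := by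
    rw [hEq]
    refine ord_add_eq hmain (lt_of_lt_of_le ?_ hE)
    rw [WithTop.coe_lt_coe]
    beta_reduce
    omega
  exact ⟨hfinal, ord_ne_zero hfinal⟩
end
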